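/- Let G be a group acting on the rooted p-adic tree, regular branch over G', and suppose St_G(1)' ≤ γ_3(G) and ψ_1(G'') ⊇ γ_3(G) × ⋯ × γ_3(G) (p copies) and ψ_1(γ_3(G)) ⊇ G' × ⋯ × G' (p copies). If moreover G' ⊇ St_G(m) for some m, then G'' ⊇ St_G(m+2). -/

import Mathlib

/-- The automorphism group of the rooted `p`-adic tree, realised as the
permutations of the vertex set (finite words over `Fin p`) that preserve
word length (i.e. levels, hence the root) and the prefix (edge) relation. -/
def treeAut (p : ℕ) : Subgroup (Equiv.Perm (List (Fin p))) where
  carrier := {f | (∀ w : List (Fin p), (f w).length = w.length) ∧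
    ∀ w v : List (Fin p), w <+: v ↔ f w <+: f v}
  one_mem' := ⟨fun _ => rfl, fun _ _ => Iff.rfl⟩
  mul_mem' := fun {f g} hf hg =>
    ⟨fun w => by
      simp only [Equiv.Perm.mul_apply]
      exact (hf.1 (g w)).trans (hg.1 w),
     fun w v => by
      simp only [Equiv.Perm.mul_apply]
      exact (hg.2 w v).trans (hf.2 (g w) (g v))⟩
  inv_mem' := fun {f} hf =>
    ⟨fun w => by
      have h := hf.1 (f⁻¹ w)
      rw [Equiv.Perm.coe_inv, Equiv.apply_symm_apply] at h
      exact h.symm,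
     fun w v => by
      have h := (hf.2 (f⁻¹ w) (f⁻¹ v))
      rw [Equiv.Perm.coe_inv, Equiv.apply_symm_apply, Equiv.apply_symm_apply] at h
      exact h.symm⟩

/-- The `n`-th level stabiliser inside the full permutation group: all
permutations fixing every vertex (word) of length `n`. -/
def levelStab (p n : ℕ) : Subgroup (Equiv.Perm (List (Fin p))) where
  carrier := {f | ∀ w : List (Fin p), w.length = n → f w = w}
  one_mem' := fun _ _ => rfl
  mul_mem' := fun {f g} hf hg w hw => by
    simp only [Equiv.Perm.mul_apply]
    rw [hg w hw, hf w hw]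
  inv_mem' := fun {f} hf w hw => by
    conv_lhs => rw [← hf w hw]
    exact Equiv.symm_apply_apply f w

/-- `g` is the section of `f` at the vertex `u`: `f` maps the subtree rooted
at `u` to itself, acting as `g` does on the subtree identified with `T`. -/
def IsSectionAt (p : ℕ) (f : Equiv.Perm (List (Fin p))) (u : List (Fin p))
    (g : Equiv.Perm (List (Fin p))) : Prop :=
  ∀ v : List (Fin p), f (u ++ v) = u ++ g v

/-- The set of sections at the vertex `u` of elements of `H` (necessarily of
elements of `H` stabilising `u`); this is `φ_u(St_H(u))`. -/
def sectionSet (p : ℕ) (H : Subgroup (Equiv.Perm (List (Fin p)))) (u : List (Fin p)) :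
    Set (Equiv.Perm (List (Fin p))) :=
  {g | ∃ f ∈ H, IsSectionAt p f u g}

/-- A commutator of two subgroups both contained in `L` is contained in `L`,
provided `L` is a subgroup (elementwise argument). -/
lemma aux_commutator_le_of_le {M : Type*} [Group M] {H K L : Subgroup M}
    (hH : H ≤ L) (hK : K ≤ L) : ⁅H, K⁆ ≤ L :=
  Subgroup.commutator_le.mpr fun a ha b hb => by
    rw [commutatorElement_def]
    exact mul_mem (mul_mem (mul_mem (hH ha) (hK hb)) (inv_mem (hH ha))) (inv_mem (hK hb))

/-- A tree automorphism fixing level `n` pointwise fixes all shorter words. -/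
lemma aux_fix_le (p n : ℕ) (hp : 0 < p) (f : Equiv.Perm (List (Fin p)))
    (hf : f ∈ treeAut p) (h : ∀ w : List (Fin p), w.length = n → f w = w) :
    ∀ w : List (Fin p), w.length ≤ n → f w = w := by
  intro w hw
  set v : List (Fin p) := w ++ List.replicate (n - w.length) (⟨0, hp⟩ : Fin p) with hv
  have hvlen : v.length = n := by simp [hv]; omega
  have h1 : w <+: v := ⟨_, rfl⟩
  have h2 : f w <+: f v := (hf.2 w v).mp h1
  rw [h v hvlen] at h2
  have e1 := List.prefix_iff_eq_take.mp h2
  have e2 := List.prefix_iff_eq_take.mp h1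
  rw [hf.1 w] at e1
  rw [e1, ← e2]

/-- Two permutations of the tree agreeing on the root and having the same
sections at every first-level vertex are equal. -/
lemma aux_eq_of_sections (p : ℕ) (f g : Equiv.Perm (List (Fin p)))
    (hf0 : f [] = []) (hg0 : g [] = []) (k : Fin p → Equiv.Perm (List (Fin p)))
    (hf : ∀ x, IsSectionAt p f [x] (k x)) (hg : ∀ x, IsSectionAt p g [x] (k x)) :
    f = g := by
  ext w
  cases w with
  | nil => rw [hf0, hg0]
  | cons x v =>
    have h1 := hf x v
    have h2 := hg x v
    simp only [List.singleton_append] at h1 h2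
    rw [h1, h2]

/-- A tree automorphism fixes the root. -/
lemma aux_root_fixed (p : ℕ) (f : Equiv.Perm (List (Fin p))) (hf : f ∈ treeAut p) :
    f [] = [] := by
  have := hf.1 ([] : List (Fin p))
  exact List.length_eq_zero_iff.mp this

/-- Let `G ≤ Aut(T)` be regular branch over `G'`, with `St_G(1)' ≤ γ₃(G)`,
`ψ_1(G'') ⊇ γ₃(G) × ⋯ × γ₃(G)` and `ψ_1(γ₃(G)) ⊇ G' × ⋯ × G'`. If moreover
`G' ⊇ St_G(m)` for some `m`, then `G'' ⊇ St_G(m+2)`. -/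
theorem second_derived_contains_level_stabiliser (p m : ℕ) (hp : p.Prime)
    (G : Subgroup (Equiv.Perm (List (Fin p))))
    (hG : G ≤ treeAut p)
    -- self-similarity
    (hss : ∀ f ∈ G, ∀ u : List (Fin p), f u = u → ∃ g ∈ G, IsSectionAt p f u g)
    -- regular branch over G'
    (hG'1 : ⁅G, G⁆ ≤ levelStab p 1)
    (hfi : ((⁅G, G⁆ : Subgroup (Equiv.Perm (List (Fin p)))).subgroupOf G).FiniteIndex)
    (hbrG' : ∀ k : Fin p → Equiv.Perm (List (Fin p)), (∀ x, k x ∈ ⁅G, G⁆) →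
      ∃ f ∈ ⁅G, G⁆, ∀ x : Fin p, IsSectionAt p f [x] (k x))
    -- St_G(1)' ≤ γ₃(G)
    (hSt1 : ⁅G ⊓ levelStab p 1, G ⊓ levelStab p 1⁆ ≤ ⁅⁅G, G⁆, G⁆)
    -- ψ_1(G'') ⊇ γ₃(G) × ⋯ × γ₃(G)
    (hψG'' : ∀ k : Fin p → Equiv.Perm (List (Fin p)), (∀ x, k x ∈ ⁅⁅G, G⁆, G⁆) →
      ∃ f ∈ ⁅⁅G, G⁆, ⁅G, G⁆⁆, ∀ x : Fin p, IsSectionAt p f [x] (k x))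
    -- ψ_1(γ₃(G)) ⊇ G' × ⋯ × G'
    (hψγ₃ : ∀ k : Fin p → Equiv.Perm (List (Fin p)), (∀ x, k x ∈ ⁅G, G⁆) →
      ∃ f ∈ ⁅⁅G, G⁆, G⁆, ∀ x : Fin p, IsSectionAt p f [x] (k x))
    -- G' ⊇ St_G(m)
    (hm : G ⊓ levelStab p m ≤ ⁅G, G⁆) :
    G ⊓ levelStab p (m + 2) ≤ ⁅⁅G, G⁆, ⁅G, G⁆⁆ := by
  have hp0 : 0 < p := hp.pos
  have hG'G : ⁅G, G⁆ ≤ G := aux_commutator_le_of_le le_rfl le_rfl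
  have hγ₃G : ⁅⁅G, G⁆, G⁆ ≤ G := aux_commutator_le_of_le hG'G le_rfl
  have hG''G : ⁅⁅G, G⁆, ⁅G, G⁆⁆ ≤ G := aux_commutator_le_of_le hG'G hG'G
  -- Step 1 : G ⊓ St(m+1) ≤ γ₃(G)
  have key : ∀ h : Equiv.Perm (List (Fin p)), h ∈ G →
      (∀ v : List (Fin p), v.length = m + 1 → h v = v) → h ∈ ⁅⁅G, G⁆, G⁆ := by
    intro h hhG hhSt
    have hfix : ∀ w : List (Fin p), w.length ≤ m + 1 → h w = w :=
      aux_fix_le p (m + 1) hp0 h (hG hhG) hhSt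
    have hsec : ∀ x : Fin p, ∃ g ∈ G, IsSectionAt p h [x] g := fun x =>
      hss h hhG [x] (hfix [x] (by simp))
    choose k hkG hksec using hsec
    have hkG' : ∀ x, k x ∈ ⁅G, G⁆ := by
      intro x
      refine hm ⟨hkG x, ?_⟩
      intro v hv
      have h1 := hksec x v
      have h2 : h ([x] ++ v) = [x] ++ v := hhSt _ (by simp [hv])
      rw [h2] at h1
      exact (List.append_cancel_left h1.symm)
    obtain ⟨f', hf'γ, hf'sec⟩ := hψγ₃ k hkG'
    have : h = f' :=
      aux_eq_of_sections p h f' (aux_root_fixed p h (hG hhG))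
        (aux_root_fixed p f' (hG (hγ₃G hf'γ))) k hksec hf'sec
    rw [this]; exact hf'γ
  -- Step 2 : main statement
  rintro f ⟨hfG, hfSt⟩
  have hfix : ∀ w : List (Fin p), w.length ≤ m + 2 → f w = w :=
    aux_fix_le p (m + 2) hp0 f (hG hfG) hfSt
  have hsec : ∀ x : Fin p, ∃ g ∈ G, IsSectionAt p f [x] g := fun x =>
    hss f hfG [x] (hfix [x] (by simp))
  choose g hgG hgsec using hsec
  have hgγ₃ : ∀ x, g x ∈ ⁅⁅G, G⁆, G⁆ := by
    intro x
    refine key (g x) (hgG x) ?_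
    intro v hv
    have h1 := hgsec x v
    have h2 : f ([x] ++ v) = [x] ++ v := hfSt _ (by simp [hv])
    rw [h2] at h1
    exact (List.append_cancel_left h1.symm)
  obtain ⟨f'', hf''G'', hf''sec⟩ := hψG'' g hgγ₃
  have : f = f'' :=
    aux_eq_of_sections p f f'' (aux_root_fixed p f (hG hfG))
      (aux_root_fixed p f'' (hG (hG''G hf''G''))) g hgsec hf''sec
  rw [this]; exact hf''G''
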